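/- Let F be a field of characteristic 2 and D a finite-dimensional central division algebra over F carrying an F-linear involution. Then u⁺(D) ≤ u(D). -/

import Mathlib

noncomputable section GenQuadForm

open scoped TensorProduct

/-- An `F`-linear involution (of the first kind) on the `F`-algebra `D`. -/
def IsFInvolution (F : Type*) {D : Type*} [Field F] [Ring D] [Algebra F D]
    (θ : D → D) : Prop :=
  (∀ a b : D, θ (a + b) = θ a + θ b) ∧
  (∀ (c : F) (a : D), θ (c • a) = c • θ a) ∧
  (∀ a b : D, θ (a * b) = θ b * θ a) ∧
  (∀ a : D, θ (θ a) = a)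

/-- `Sym(D,θ)`, the set of symmetric elements. -/
def SymSet {D : Type*} (θ : D → D) : Set D := {a | θ a = a}

/-- `Alt(D,θ) = {a - θ a | a ∈ D}`, the set of alternating elements. -/
def AltSet {D : Type*} [Ring D] (θ : D → D) : Set D := {a | ∃ b : D, a = b - θ b}

/-- The right scalar multiple of a vector `x ∈ Dⁿ` by `d ∈ D`. -/
def rsmul {D : Type*} [Ring D] {n : ℕ} (x : Fin n → D) (d : D) : Fin n → D :=
  fun i => x i * d

/-- `h` is a hermitian form on the (right) `D`-vector space `Dⁿ` with respect to the
involution `θ`: bi-additive, sesquilinear and `θ`-symmetric. (Every `n`-dimensional right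
`D`-vector space is isomorphic to `Dⁿ`.) -/
def IsHermForm {D : Type*} [Ring D] (θ : D → D) (n : ℕ)
    (h : (Fin n → D) → (Fin n → D) → D) : Prop :=
  (∀ x x' y : Fin n → D, h (x + x') y = h x y + h x' y) ∧
  (∀ x y y' : Fin n → D, h x (y + y') = h x y + h x y') ∧
  (∀ (x y : Fin n → D) (d₁ d₂ : D), h (rsmul x d₁) (rsmul y d₂) = θ d₁ * h x y * d₂) ∧
  (∀ x y : Fin n → D, h y x = θ (h x y))

/-- A hermitian form is anisotropic if `h x x = 0` only for `x = 0`. -/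
def HermAnisotropic {D : Type*} [Ring D] (n : ℕ)
    (h : (Fin n → D) → (Fin n → D) → D) : Prop :=
  ∀ x : Fin n → D, h x x = 0 → x = 0

/-- A hermitian form is alternating if `h x x ∈ Alt(D,θ)` for all `x`. -/
def HermAlternating {D : Type*} [Ring D] (θ : D → D) (n : ℕ)
    (h : (Fin n → D) → (Fin n → D) → D) : Prop :=
  ∀ x : Fin n → D, h x x ∈ AltSet θ

/-- A hermitian form is direct if `h x x ∉ Alt(D,θ)` for all `x ≠ 0`. -/
def HermDirect {D : Type*} [Ring D] (θ : D → D) (n : ℕ)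
    (h : (Fin n → D) → (Fin n → D) → D) : Prop :=
  ∀ x : Fin n → D, x ≠ 0 → h x x ∉ AltSet θ

/-- A hermitian form is nondegenerate if its radical is trivial. -/
def HermNondegenerate {D : Type*} [Ring D] (n : ℕ)
    (h : (Fin n → D) → (Fin n → D) → D) : Prop :=
  ∀ x : Fin n → D, (∀ y : Fin n → D, h x y = 0) → x = 0

/-- The diagonal hermitian form `⟨a₁,…,aₙ⟩ʰ` over `(D,θ)`. -/
def diagHerm {D : Type*} [Ring D] (θ : D → D) {n : ℕ} (a : Fin n → D) :
    (Fin n → D) → (Fin n → D) → D :=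
  fun x y => ∑ i, θ (x i) * a i * y i

/-- `q` (a representative function of a map `Dⁿ → D/Alt(D,θ)`) is a generalised quadratic form
over `(D,θ)` with polar form `h`: all defining identities are required modulo `Alt(D,θ)`. -/
def IsQuadForm {D : Type*} [Ring D] (θ : D → D) (n : ℕ)
    (q : (Fin n → D) → D) (h : (Fin n → D) → (Fin n → D) → D) : Prop :=
  IsHermForm θ n h ∧
  (∀ (x : Fin n → D) (d : D), q (rsmul x d) - θ d * q x * d ∈ AltSet θ) ∧
  (∀ x y : Fin n → D, q (x + y) - q x - q y - h x y ∈ AltSet θ)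

/-- A quadratic form over `(D,θ)` is isotropic if it vanishes modulo `Alt(D,θ)` at some
nonzero vector. -/
def QuadIsotropic {D : Type*} [Ring D] (θ : D → D) (n : ℕ)
    (q : (Fin n → D) → D) : Prop :=
  ∃ x : Fin n → D, x ≠ 0 ∧ q x ∈ AltSet θ

/-- A quadratic form over `(D,θ)` is anisotropic if it is not isotropic. -/
def QuadAnisotropic {D : Type*} [Ring D] (θ : D → D) (n : ℕ)
    (q : (Fin n → D) → D) : Prop :=
  ∀ x : Fin n → D, x ≠ 0 → q x ∉ AltSet θ

/-- A quadratic form over `(D,θ)` represents `a ∈ D` if its value at some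
nonzero vector is `a + Alt(D,θ)`. -/
def QuadRepresents {D : Type*} [Ring D] (θ : D → D) (n : ℕ)
    (q : (Fin n → D) → D) (a : D) : Prop :=
  ∃ x : Fin n → D, x ≠ 0 ∧ q x - a ∈ AltSet θ

/-- A quadratic form over `(D,θ)` is totally singular if its polar form is identically zero. -/
def QuadTotallySingular {D : Type*} [Ring D] (θ : D → D) (n : ℕ)
    (q : (Fin n → D) → D) : Prop :=
  IsQuadForm θ n q (fun _ _ => 0)

/-- A quadratic form over `(D,θ)` is nonsingular if its polar form is nondegenerate. -/
def QuadNonsingular {D : Type*} [Ring D] (θ : D → D) (n : ℕ)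
    (q : (Fin n → D) → D) : Prop :=
  ∃ h, IsQuadForm θ n q h ∧ HermNondegenerate n h

/-- The diagonal quadratic form `⟨a₁,…,aₙ⟩` over `(D,θ)`. -/
def diagQuad {D : Type*} [Ring D] (θ : D → D) {n : ℕ} (a : Fin n → D) :
    (Fin n → D) → D :=
  fun x => ∑ i, θ (x i) * a i * x i

/-- `u⁺(D)`: the supremum of the dimensions of anisotropic hermitian forms over `(D,θ)`. -/
def uHermPlus {D : Type*} [DivisionRing D] (θ : D → D) : ℕ∞ :=
  ⨆ n ∈ {n : ℕ | ∃ h, IsHermForm θ n h ∧ HermAnisotropic n h}, (n : ℕ∞)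

/-- `u⁺_d(D)`: the supremum of the dimensions of direct hermitian forms over `(D,θ)`. -/
def uHermPlusDirect {D : Type*} [DivisionRing D] (θ : D → D) : ℕ∞ :=
  ⨆ n ∈ {n : ℕ | ∃ h, IsHermForm θ n h ∧ HermDirect θ n h}, (n : ℕ∞)

/-- `u⁻(D)`: the supremum of the dimensions of anisotropic alternating hermitian forms
over `(D,θ)`. -/
def uHermMinus {D : Type*} [DivisionRing D] (θ : D → D) : ℕ∞ :=
  ⨆ n ∈ {n : ℕ | ∃ h, IsHermForm θ n h ∧ HermAnisotropic n h ∧ HermAlternating θ n h},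
    (n : ℕ∞)

/-- `u(D)`: the supremum of the dimensions of anisotropic (generalised) quadratic forms
over `(D,θ)`. -/
def uQuad {D : Type*} [DivisionRing D] (θ : D → D) : ℕ∞ :=
  ⨆ n ∈ {n : ℕ | ∃ q h, IsQuadForm θ n q h ∧ QuadAnisotropic θ n q}, (n : ℕ∞)

/-- `ũ(D)`: the supremum of the dimensions of anisotropic nonsingular quadratic forms
over `(D,θ)`. -/
def uQuadTilde {D : Type*} [DivisionRing D] (θ : D → D) : ℕ∞ :=
  ⨆ n ∈ {n : ℕ | ∃ q, QuadNonsingular θ n q ∧ QuadAnisotropic θ n q}, (n : ℕ∞)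

/-- The polar form of a quadratic form over a field. -/
def polarF {F : Type*} [Field F] {n : ℕ} (q : (Fin n → F) → F) :
    (Fin n → F) → (Fin n → F) → F :=
  fun x y => q (x + y) - q x - q y

/-- A quadratic form over the field `F` (on `Fⁿ`): `q (a • x) = a² q x` and the polar
form is bilinear. -/
def IsQuadFormField {F : Type*} [Field F] (n : ℕ) (q : (Fin n → F) → F) : Prop :=
  (∀ (a : F) (x : Fin n → F), q (a • x) = a ^ 2 * q x) ∧
  (∀ x x' y : Fin n → F, polarF q (x + x') y = polarF q x y + polarF q x' y) ∧
  (∀ (a : F) (x y : Fin n → F), polarF q (a • x) y = a * polarF q x y)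

def QFieldNonsingular {F : Type*} [Field F] (n : ℕ) (q : (Fin n → F) → F) : Prop :=
  ∀ x : Fin n → F, (∀ y : Fin n → F, polarF q x y = 0) → x = 0

def QFieldTotallySingular {F : Type*} [Field F] (n : ℕ) (q : (Fin n → F) → F) : Prop :=
  ∀ x y : Fin n → F, q (x + y) = q x + q y

def QFieldAnisotropic {F : Type*} [Field F] (n : ℕ) (q : (Fin n → F) → F) : Prop :=
  ∀ x : Fin n → F, q x = 0 → x = 0

/-- `ũ(F)`: the supremum of the dimensions of anisotropic nonsingular quadratic forms
over the field `F`. -/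
def uTildeField (F : Type*) [Field F] : ℕ∞ :=
  ⨆ n ∈ {n : ℕ | ∃ q : (Fin n → F) → F,
      IsQuadFormField n q ∧ QFieldNonsingular n q ∧ QFieldAnisotropic n q}, (n : ℕ∞)

/-- The subfield `F² = {a² : a ∈ F}` of a field of characteristic `2`. -/
def sqSubfield (F : Type*) [Field F] [CharP F 2] : Subfield F :=
  (frobenius F 2).fieldRange

/-- `[F : F²]` as an element of `ℕ ∪ {∞}`. -/
def sqIndex (F : Type*) [Field F] [CharP F 2] : ℕ∞ :=
  Cardinal.toENat (Module.rank (sqSubfield F) F)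

/-- `℘(F) = {a² + a : a ∈ F}`. -/
def wpSet (F : Type*) [Field F] : Set F := {a | ∃ b : F, a = b ^ 2 + b}

/-! In characteristic `2` the vectors `x` with `h(x,x) ∈ Alt(D,θ)` form a subspace `W`, on which
`h` is alternating. Writing the Gram matrix of `h|W` as `C + θ(C)ᵀ` with `C` triangular turns
`h|W` into the polar of a quadratic form `Q` with `Q(w) + θ(Q(w)) = h(w,w)`. For any complement
`P` of `W`, `q(w + p) = Q(w) + h(p,p)` is a quadratic form (with polar `h|W ⊥ 0`). If
`q(w + p) ∈ Alt(D,θ)`, then `0 = q + θ(q) = h(w,w)`, so `w = 0` by anisotropy; then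
`h(p,p) ∈ Alt(D,θ)` puts `p` in `W ∩ P = 0`. -/

open MulOpposite

structure IsInvolution {D : Type*} [Ring D] (θ : D → D) : Prop where
  map_add : ∀ a b : D, θ (a + b) = θ a + θ b
  map_mul : ∀ a b : D, θ (a * b) = θ b * θ a
  involutive : ∀ a : D, θ (θ a) = a

theorem IsFInvolution.isInvolution {F D : Type*} [Field F] [Ring D] [Algebra F D] {θ : D → D}
    (hθ : IsFInvolution F θ) : IsInvolution θ :=
  ⟨hθ.1, hθ.2.2.1, hθ.2.2.2⟩

theorem sub_mem_altSet {D : Type*} [Ring D] (θ : D → D) (a : D) : a - θ a ∈ AltSet θ := ⟨a, rfl⟩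

theorem add_mem_altSet_of_charTwo {D : Type*} [Ring D] [CharP D 2] (θ : D → D) (a : D) :
    a + θ a ∈ AltSet θ :=
  CharTwo.sub_eq_add a (θ a) ▸ sub_mem_altSet θ a

namespace IsInvolution

variable {D : Type*} [Ring D] {θ : D → D} (hθ : IsInvolution θ)
include hθ

def toAddMonoidHom : D →+ D := AddMonoidHom.mk' θ hθ.map_add

theorem map_zero : θ 0 = 0 := hθ.toAddMonoidHom.map_zero

theorem map_sum {ι : Type*} (s : Finset ι) (f : ι → D) :
    θ (∑ i ∈ s, f i) = ∑ i ∈ s, θ (f i) :=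
  _root_.map_sum hθ.toAddMonoidHom f s

theorem map_sub (a b : D) : θ (a - b) = θ a - θ b := hθ.toAddMonoidHom.map_sub a b

theorem zero_mem_altSet : (0 : D) ∈ AltSet θ := ⟨0, by rw [hθ.map_zero, sub_zero]⟩

theorem add_mem_altSet {a b : D} (ha : a ∈ AltSet θ) (hb : b ∈ AltSet θ) :
    a + b ∈ AltSet θ := by
  obtain ⟨c, rfl⟩ := ha
  obtain ⟨e, rfl⟩ := hb
  exact ⟨c + e, by rw [hθ.map_add, add_sub_add_comm]⟩

theorem conj_mem_altSet {a : D} (d : D) (ha : a ∈ AltSet θ) : θ d * a * d ∈ AltSet θ := by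
  obtain ⟨b, rfl⟩ := ha
  exact ⟨θ d * b * d, by
    rw [mul_sub, sub_mul, hθ.map_mul, hθ.map_mul, hθ.involutive]; simp only [mul_assoc]⟩

variable [CharP D 2]

theorem eq_of_mem_altSet {a : D} (ha : a ∈ AltSet θ) : θ a = a := by
  obtain ⟨b, rfl⟩ := ha
  rw [hθ.map_sub, hθ.involutive, CharTwo.sub_eq_add, CharTwo.sub_eq_add, add_comm]

end IsInvolution

theorem exists_eq_add_thetaTranspose {D ι : Type*} [Ring D] [CharP D 2] [LinearOrder ι]
    {θ : D → D} (hθ : IsInvolution θ) (H : ι → ι → D) (hsymm : ∀ i j, θ (H j i) = H i j)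
    (hdiag : ∀ i, H i i ∈ AltSet θ) :
    ∃ C : ι → ι → D, H = C + fun i j => θ (C j i) := by
  choose c hc using hdiag
  refine ⟨fun i j => if i < j then H i j else if i = j then c i else 0, ?_⟩
  ext i j
  rcases lt_trichotomy i j with hij | rfl | hij
  · simp [hij, hij.ne', not_lt.mpr hij.le, hθ.map_zero]
  · simp [hc i, CharTwo.sub_eq_add]
  · simp [hij, hij.ne', not_lt.mpr hij.le, hsymm]

section SesqSum

variable {D : Type*} [Ring D] {θ : D → D} {ι : Type*} [Fintype ι]

def sesqSum (θ : D → D) (M : ι → ι → D) (x y : ι → D) : D :=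
  ∑ i, ∑ j, θ (x i) * M i j * y j

theorem sesqSum_add_left (hθ : IsInvolution θ) (M : ι → ι → D) (x x' y : ι → D) :
    sesqSum θ M (x + x') y = sesqSum θ M x y + sesqSum θ M x' y := by
  simp only [sesqSum, Pi.add_apply, hθ.map_add, add_mul, Finset.sum_add_distrib]

theorem sesqSum_add_right (M : ι → ι → D) (x y y' : ι → D) :
    sesqSum θ M x (y + y') = sesqSum θ M x y + sesqSum θ M x y' := by
  simp only [sesqSum, Pi.add_apply, mul_add, Finset.sum_add_distrib]

theorem sesqSum_add_matrix (M N : ι → ι → D) (x y : ι → D) :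
    sesqSum θ (M + N) x y = sesqSum θ M x y + sesqSum θ N x y := by
  simp only [sesqSum, Pi.add_apply, mul_add, add_mul, Finset.sum_add_distrib]

theorem sesqSum_mul_right (hθ : IsInvolution θ) (M : ι → ι → D) (x y : ι → D) (d d' : D) :
    sesqSum θ M (fun i => x i * d) (fun j => y j * d') = θ d * sesqSum θ M x y * d' := by
  simp only [sesqSum, hθ.map_mul, Finset.mul_sum, Finset.sum_mul, mul_assoc]

theorem map_sesqSum (hθ : IsInvolution θ) (M : ι → ι → D) (x y : ι → D) :
    θ (sesqSum θ M x y) = sesqSum θ (fun i j => θ (M j i)) y x := by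
  simp only [sesqSum, hθ.map_sum, hθ.map_mul, hθ.involutive, mul_assoc]
  exact Finset.sum_comm

end SesqSum

instance DivisionRing.moduleFinite_op {D : Type*} [DivisionRing D] : Module.Finite Dᵐᵒᵖ D :=
  Module.Finite.of_surjective (LinearMap.toSpanSingleton Dᵐᵒᵖ D 1) fun x => ⟨op x, by simp⟩

section HermitianForm

variable {D : Type*} {θ : D → D} {n : ℕ} {h : (Fin n → D) → (Fin n → D) → D}

theorem smul_eq_rsmul [Ring D] (c : Dᵐᵒᵖ) (x : Fin n → D) : c • x = rsmul x (unop c) := by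
  funext i
  simp [rsmul, MulOpposite.smul_eq_mul_unop]

theorem rsmul_eq_op_smul [Ring D] (x : Fin n → D) (d : D) : rsmul x d = op d • x := by
  rw [smul_eq_rsmul, unop_op]

namespace IsHermForm

theorem map_zero_left [Ring D] (hh : IsHermForm θ n h) (y : Fin n → D) : h 0 y = 0 := by
  simpa using hh.1 0 0 y

theorem map_sum_left [Ring D] (hh : IsHermForm θ n h) {ι : Type*} (s : Finset ι)
    (f : ι → Fin n → D) (y : Fin n → D) : h (∑ i ∈ s, f i) y = ∑ i ∈ s, h (f i) y :=
  map_sum (AddMonoidHom.mk' (h · y) fun x x' => hh.1 x x' y) f s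

theorem map_sum_right [Ring D] (hh : IsHermForm θ n h) {ι : Type*} (s : Finset ι)
    (x : Fin n → D) (f : ι → Fin n → D) : h x (∑ i ∈ s, f i) = ∑ i ∈ s, h x (f i) :=
  map_sum (AddMonoidHom.mk' (h x) fun y y' => hh.2.1 x y y') f s

theorem map_sum_rsmul [Ring D] (hh : IsHermForm θ n h) {ι : Type*} [Fintype ι]
    (v : ι → Fin n → D) (a a' : ι → D) :
    h (∑ i, rsmul (v i) (a i)) (∑ j, rsmul (v j) (a' j))
      = sesqSum θ (fun i j => h (v i) (v j)) a a' := by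
  rw [hh.map_sum_left]
  refine Finset.sum_congr rfl fun i _ => ?_
  rw [hh.map_sum_right]
  exact Finset.sum_congr rfl fun j _ => hh.2.2.1 _ _ _ _

def altSubmodule [Ring D] [CharP D 2] (hθ : IsInvolution θ) (hh : IsHermForm θ n h) :
    Submodule Dᵐᵒᵖ (Fin n → D) where
  carrier := {x | h x x ∈ AltSet θ}
  zero_mem' := by
    simp only [Set.mem_ofPred_eq, hh.map_zero_left, hθ.zero_mem_altSet]
  add_mem' := by
    intro x y hx hy
    have hexp : h (x + y) (x + y) = (h x x + h y y) + (h x y + θ (h x y)) := by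
      rw [hh.1, hh.2.1, hh.2.1, ← hh.2.2.2]
      abel
    rw [Set.mem_ofPred_eq, hexp]
    exact hθ.add_mem_altSet (hθ.add_mem_altSet hx hy) (add_mem_altSet_of_charTwo θ _)
  smul_mem' := by
    intro c x hx
    rw [Set.mem_ofPred_eq, smul_eq_rsmul, hh.2.2.1]
    exact hθ.conj_mem_altSet _ hx

theorem exists_quadratic_refinement [DivisionRing D] [CharP D 2] (hθ : IsInvolution θ)
    (hh : IsHermForm θ n h) (W : Submodule Dᵐᵒᵖ (Fin n → D)) (hW : ∀ w ∈ W, h w w ∈ AltSet θ) :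
    ∃ Q : W → D, (∀ (c : Dᵐᵒᵖ) (w : W), Q (c • w) = θ (unop c) * Q w * unop c) ∧
      (∀ w w' : W, Q (w + w') - Q w - Q w' - h w w' ∈ AltSet θ) ∧
      ∀ w : W, Q w + θ (Q w) = h w w := by
  let b := Module.finBasis Dᵐᵒᵖ W
  let a : W → Fin _ → D := fun w i => unop (b.repr w i)
  have ha_add : ∀ w w', a (w + w') = a w + a w' := fun w w' => by
    funext i
    simp [a]
  have ha_smul : ∀ c w, a (c • w) = fun i => a w i * unop c := fun c w => by
    funext i
    simp [a]
  have hexpand : ∀ w w' : W, h w w' = sesqSum θ (fun i j => h (b i) (b j)) (a w) (a w') := by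
    have hb : ∀ w : W, (w : Fin n → D) = ∑ i, rsmul (b i : Fin n → D) (a w i) := fun w => by
      conv_lhs => rw [← b.sum_repr w]
      simp only [Submodule.coe_sum, Submodule.coe_smul, smul_eq_rsmul, a]
    intro w w'
    rw [hb w, hb w', hh.map_sum_rsmul]
  obtain ⟨C, hC⟩ := exists_eq_add_thetaTranspose hθ (fun i j => h (b i) (b j))
    (fun _ _ => (hh.2.2.2 _ _).symm) (fun i => hW _ (b i).2)
  refine ⟨fun w => sesqSum θ C (a w) (a w), fun c w => ?_, fun w w' => ?_, fun w => ?_⟩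
  · dsimp only
    rw [ha_smul, sesqSum_mul_right hθ]
  · dsimp only
    rw [hexpand, hC, sesqSum_add_matrix, ← map_sesqSum hθ, ha_add, sesqSum_add_left hθ,
      sesqSum_add_right, sesqSum_add_right]
    convert sub_mem_altSet θ (sesqSum θ C (a w') (a w)) using 1
    abel
  · dsimp only
    rw [map_sesqSum hθ, ← sesqSum_add_matrix, ← hC, hexpand]

end IsHermForm

end HermitianForm

section Assembly

variable {D : Type*} [DivisionRing D] [CharP D 2] {θ : D → D} {n : ℕ}
  {h : (Fin n → D) → (Fin n → D) → D} {W P : Submodule Dᵐᵒᵖ (Fin n → D)}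

def quadOfIsCompl (h : (Fin n → D) → (Fin n → D) → D) (hWP : IsCompl W P) (Q : W → D)
    (x : Fin n → D) : D :=
  Q (W.projectionOnto P hWP x) +
    h (P.projectionOnto W hWP.symm x) (P.projectionOnto W hWP.symm x)

theorem isQuadForm_quadOfIsCompl (hθ : IsInvolution θ) (hh : IsHermForm θ n h)
    (hWP : IsCompl W P) {Q : W → D}
    (hQ_smul : ∀ (c : Dᵐᵒᵖ) (w : W), Q (c • w) = θ (unop c) * Q w * unop c)
    (hQ_polar : ∀ w w' : W, Q (w + w') - Q w - Q w' - h w w' ∈ AltSet θ) :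
    IsQuadForm θ n (quadOfIsCompl h hWP Q)
      (fun x y => h (W.projectionOnto P hWP x) (W.projectionOnto P hWP y)) := by
  refine ⟨⟨fun x x' y => ?_, fun x y y' => ?_, fun x y d₁ d₂ => ?_, fun x y => hh.2.2.2 _ _⟩,
    fun x d => ?_, fun x y => ?_⟩
  · simp only [map_add, Submodule.coe_add, hh.1]
  · simp only [map_add, Submodule.coe_add, hh.2.1]
  · simp only [rsmul_eq_op_smul, map_smul, Submodule.coe_smul]
    rw [smul_eq_rsmul, smul_eq_rsmul, unop_op, unop_op, hh.2.2.1]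
  · rw [quadOfIsCompl, quadOfIsCompl, rsmul_eq_op_smul, map_smul, map_smul, hQ_smul,
      Submodule.coe_smul, smul_eq_rsmul, hh.2.2.1, unop_op, mul_add, add_mul, sub_self]
    exact hθ.zero_mem_altSet
  · set p := P.projectionOnto W hWP.symm
    convert hθ.add_mem_altSet (hQ_polar (W.projectionOnto P hWP x) (W.projectionOnto P hWP y))
      (add_mem_altSet_of_charTwo θ (h (p x) (p y))) using 1
    simp only [quadOfIsCompl, map_add, Submodule.coe_add, hh.1, hh.2.1]
    rw [← hh.2.2.2]
    abel

theorem quadAnisotropic_quadOfIsCompl (hθ : IsInvolution θ) (hh : IsHermForm θ n h)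
    (han : HermAnisotropic n h) (hWP : IsCompl (hh.altSubmodule hθ) P)
    {Q : hh.altSubmodule hθ → D} (hQ_zero : Q 0 = 0)
    (hQ_diag : ∀ w, Q w + θ (Q w) = h w w) :
    QuadAnisotropic θ n (quadOfIsCompl h hWP Q) := by
  intro x hx0 hqx
  set w := (hh.altSubmodule hθ).projectionOnto P hWP x
  set p := P.projectionOnto _ hWP.symm x
  have hq : quadOfIsCompl h hWP Q x = Q w + h p p := rfl
  have hw : w = 0 := by
    refine Subtype.ext (han _ ?_)
    have hsymm : quadOfIsCompl h hWP Q x + θ (quadOfIsCompl h hWP Q x) = 0 := by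
      rw [hθ.eq_of_mem_altSet hqx, CharTwo.add_self_eq_zero]
    rwa [hq, hθ.map_add, add_add_add_comm, hQ_diag, ← hh.2.2.2, CharTwo.add_self_eq_zero,
      add_zero] at hsymm
  have hp : p = 0 := by
    have hpW : (p : Fin n → D) ∈ hh.altSubmodule hθ := by
      rw [hq, hw, hQ_zero, zero_add] at hqx
      exact hqx
    exact Subtype.ext (Submodule.disjoint_def.mp hWP.disjoint _ hpW p.2)
  apply hx0
  rw [← (hh.altSubmodule hθ).projection_add_projection_eq_self hWP x]
  show (w : Fin n → D) + p = 0
  rw [hw, hp, Submodule.coe_zero, Submodule.coe_zero, add_zero]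

end Assembly

theorem IsHermForm.exists_quadForm_quadAnisotropic {D : Type*} [DivisionRing D] [CharP D 2]
    {θ : D → D} {n : ℕ} {h : (Fin n → D) → (Fin n → D) → D} (hθ : IsInvolution θ)
    (hh : IsHermForm θ n h) (han : HermAnisotropic n h) :
    ∃ q h', IsQuadForm θ n q h' ∧ QuadAnisotropic θ n q := by
  obtain ⟨Q, hQ_smul, hQ_polar, hQ_diag⟩ :=
    hh.exists_quadratic_refinement hθ (hh.altSubmodule hθ) fun _ hw => hw
  obtain ⟨P, hWP⟩ := (hh.altSubmodule hθ).exists_isCompl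
  have hQ_zero : Q 0 = 0 := by simpa using hQ_smul 0 0
  exact ⟨_, _, isQuadForm_quadOfIsCompl hθ hh hWP hQ_smul hQ_polar,
    quadAnisotropic_quadOfIsCompl hθ hh han hWP hQ_zero hQ_diag⟩

theorem uHermPlus_le_uQuad {D : Type*} [DivisionRing D] [CharP D 2] {θ : D → D}
    (hθ : IsInvolution θ) : uHermPlus θ ≤ uQuad θ :=
  biSup_mono fun _ ⟨_, hh, han⟩ => hh.exists_quadForm_quadAnisotropic hθ han

theorem stmt5_general {F D : Type*} [Field F] [CharP F 2] [DivisionRing D] [Algebra F D]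
    (θ : D → D) (hθ : IsFInvolution F θ) :
    uHermPlus θ ≤ uQuad θ := by
  have : CharP D 2 := charP_of_injective_algebraMap (algebraMap F D).injective 2
  exact uHermPlus_le_uQuad hθ.isInvolution

/-- `u⁺(D) ≤ u(D)`. -/
theorem stmt5 {F D : Type*} [Field F] [CharP F 2] [DivisionRing D] [Algebra F D]
    [FiniteDimensional F D] [Algebra.IsCentral F D]
    (θ : D → D) (hθ : IsFInvolution F θ) :
    uHermPlus θ ≤ uQuad θ :=
  stmt5_general θ hθ

end GenQuadForm
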